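/- In the two-switch protocol with configurations {0, 1, Next, Ready}, for every k with 1 ≤ k ≤ n: at the end of the k-th iteration of the leader's final repeat loop (his k-th flip Next→Ready), exactly k prisoners are exhausted, and each exhausted prisoner has visited every room. Consequently, the leader declares only after all n prisoners have visited every room. -/
import Mathlib


/-- The four configurations available with two switches. -/
inductive C4 where
  | zero | one | next | ready
deriving DecidableEq

/-- Global state: room configurations, each prisoner's local program state
(line of his algorithm, loop counter), and the declaration flag. -/
structure TS (n r : ℕ) where
  rooms : Fin r → C4
  loc : Fin n → ℕ × ℕ
  declared : Bool

/-- The leader's algorithm: flip all `r` rooms `0 → 1` (line 0), then all `r`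
rooms `1 → 0` (line 1), then one room `0 → Next` (line 2), then `n` times flip
a room `Next → Ready` (line 3), finally declaring; line 4 is termination.
Returns (new local state, configuration left in the room, declare?). -/
def leaderAct (r n : ℕ) (st : ℕ × ℕ) (c : C4) : (ℕ × ℕ) × C4 × Bool :=
  match st.1 with
  | 0 => if c = C4.zero then
           (if st.2 + 1 = r then ((1, 0), C4.one, false)
            else ((0, st.2 + 1), C4.one, false))
         else (st, c, false)
  | 1 => if c = C4.one then
           (if st.2 + 1 = r then ((2, 0), C4.zero, false)
            else ((1, st.2 + 1), C4.zero, false))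
         else (st, c, false)
  | 2 => if c = C4.zero then ((3, 0), C4.next, false) else (st, c, false)
  | 3 => if c = C4.next then
           (if st.2 + 1 = n then ((4, 0), C4.ready, true)
            else ((3, st.2 + 1), C4.ready, false))
         else (st, c, false)
  | _ => (st, c, false)

/-- A non-leader's algorithm: wait for a room in `Ready` and flip it to `0`
(line 0), then flip all `r` rooms `0 → 1` (line 1), then all `r` rooms
`1 → 0` (line 2), then one room `0 → Next` (line 3); line 4 is termination. -/
def otherAct (r : ℕ) (st : ℕ × ℕ) (c : C4) : (ℕ × ℕ) × C4 × Bool :=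
  match st.1 with
  | 0 => if c = C4.ready then ((1, 0), C4.zero, false) else (st, c, false)
  | 1 => if c = C4.zero then
           (if st.2 + 1 = r then ((2, 0), C4.one, false)
            else ((1, st.2 + 1), C4.one, false))
         else (st, c, false)
  | 2 => if c = C4.one then
           (if st.2 + 1 = r then ((3, 0), C4.zero, false)
            else ((2, st.2 + 1), C4.zero, false))
         else (st, c, false)
  | 3 => if c = C4.zero then ((4, 0), C4.next, false) else (st, c, false)
  | _ => (st, c, false)

/-- One visit of prisoner `v.1` to room `v.2` (with leader `L`). -/
def tsStep {n r : ℕ} (L : Fin n) (v : Fin n × Fin r) (s : TS n r) : TS n r :=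
  let a := if v.1 = L then leaderAct r n (s.loc v.1) (s.rooms v.2)
           else otherAct r (s.loc v.1) (s.rooms v.2)
  { rooms := Function.update s.rooms v.2 a.2.1
    loc := Function.update s.loc v.1 a.1
    declared := s.declared || a.2.2 }

/-- The state after `t` visits; all rooms start in configuration `0`. -/
def tsRun {n r : ℕ} (L : Fin n) (sch : ℕ → Fin n × Fin r) : ℕ → TS n r
  | 0 => ⟨fun _ => C4.zero, fun _ => (0, 0), false⟩
  | t + 1 => tsStep L (sch t) (tsRun L sch t)

/-- A prisoner is exhausted if he has completed all his flipping phases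
(for the leader, everything before the final repeat loop). -/
def tsExhausted {n r : ℕ} (L : Fin n) (s : TS n r) (p : Fin n) : Prop :=
  if p = L then 3 ≤ (s.loc p).1 else 4 ≤ (s.loc p).1

/-- A prisoner is active if he has begun his flipping phases (for non-leaders,
has executed his `Ready → 0` flip) and is not exhausted. -/
def tsActive {n r : ℕ} (L : Fin n) (s : TS n r) (p : Fin n) : Prop :=
  if p = L then (s.loc p).1 < 3 else 1 ≤ (s.loc p).1 ∧ (s.loc p).1 < 4

section TwoSwitchAux

open Finset

variable {n r : ℕ}

/-- Prisoner `p` has visited room `rm` strictly before time `t`. -/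
def tsVis (sch : ℕ → Fin n × Fin r) (t : ℕ) (p : Fin n) (rm : Fin r) : Prop :=
  ∃ t' < t, sch t' = (p, rm)

lemma tsVis_mono {sch : ℕ → Fin n × Fin r} {t : ℕ} {p : Fin n} {rm : Fin r}
    (h : tsVis sch t p rm) : tsVis sch (t + 1) p rm := by
  obtain ⟨t', ht, he⟩ := h
  exact ⟨t', ht.trans (Nat.lt_succ_self t), he⟩

def Rooms01 (R : Fin r → C4) (S : Finset (Fin r)) : Prop :=
  ∀ rm, R rm = if rm ∈ S then C4.one else C4.zero

def Rooms10 (R : Fin r → C4) (S : Finset (Fin r)) : Prop :=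
  ∀ rm, R rm = if rm ∈ S then C4.zero else C4.one

def RoomsTok (R : Fin r → C4) (x : Fin r) (c : C4) : Prop :=
  ∀ rm, R rm = if rm = x then c else C4.zero

lemma Rooms01_cases {R : Fin r → C4} {S : Finset (Fin r)} (h : Rooms01 R S) (rm : Fin r) :
    R rm = C4.one ∨ R rm = C4.zero := by
  rw [h rm]; split <;> simp

lemma Rooms10_cases {R : Fin r → C4} {S : Finset (Fin r)} (h : Rooms10 R S) (rm : Fin r) :
    R rm = C4.one ∨ R rm = C4.zero := by
  rw [h rm]; split <;> simp

lemma RoomsTok_cases {R : Fin r → C4} {x : Fin r} {c : C4} (h : RoomsTok R x c) (rm : Fin r) :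
    R rm = c ∨ R rm = C4.zero := by
  rw [h rm]; split <;> simp

lemma Rooms01_insert {R : Fin r → C4} {S : Finset (Fin r)} {x : Fin r} (h : Rooms01 R S) :
    Rooms01 (Function.update R x C4.one) (insert x S) := by
  intro rm
  rcases eq_or_ne rm x with hrm | hrm
  · subst hrm; simp
  · simp [Function.update_apply, hrm, h rm, Finset.mem_insert]

lemma Rooms10_insert {R : Fin r → C4} {S : Finset (Fin r)} {x : Fin r} (h : Rooms10 R S) :
    Rooms10 (Function.update R x C4.zero) (insert x S) := by
  intro rm
  rcases eq_or_ne rm x with hrm | hrm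
  · subst hrm; simp
  · simp [Function.update_apply, hrm, h rm, Finset.mem_insert]

lemma insert_eq_univ_of_card {S : Finset (Fin r)} {x : Fin r} (hx : x ∉ S)
    (h : S.card + 1 = r) : insert x S = Finset.univ :=
  Finset.eq_univ_of_card _ (by rw [Finset.card_insert_of_notMem hx, h, Fintype.card_fin])

/-- Finset of exhausted non-leaders. -/
def doneF (L : Fin n) (f : Fin n → ℕ × ℕ) : Finset (Fin n) :=
  Finset.univ.filter (fun p => p ≠ L ∧ (f p).1 = 4)

lemma mem_doneF {L : Fin n} {f : Fin n → ℕ × ℕ} {q : Fin n} :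
    q ∈ doneF L f ↔ q ≠ L ∧ (f q).1 = 4 := by
  simp [doneF]

lemma doneF_update_L {L : Fin n} {f : Fin n → ℕ × ℕ} (st : ℕ × ℕ) :
    doneF L (Function.update f L st) = doneF L f := by
  ext q
  simp only [mem_doneF, Function.update_apply]
  constructor <;> rintro ⟨hq, h4⟩ <;> exact ⟨hq, by simpa [hq] using h4⟩

lemma doneF_update_ne4 {L p : Fin n} {f : Fin n → ℕ × ℕ} {st : ℕ × ℕ}
    (h4 : st.1 ≠ 4) (hold : (f p).1 ≠ 4) :
    doneF L (Function.update f p st) = doneF L f := by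
  ext q
  simp only [mem_doneF, Function.update_apply]
  rcases eq_or_ne q p with h | h <;> simp [h, h4, hold]

lemma doneF_update_to4 {L p : Fin n} {f : Fin n → ℕ × ℕ} {st : ℕ × ℕ}
    (hp : p ≠ L) (h4 : st.1 = 4) :
    doneF L (Function.update f p st) = insert p (doneF L f) := by
  ext q
  simp only [mem_doneF, Function.update_apply, Finset.mem_insert]
  rcases eq_or_ne q p with h | h <;> simp [h, h4, hp, mem_doneF]

def IdleF (f : Fin n → ℕ × ℕ) (p : Fin n) : Prop :=
  (f p).1 = 0 ∨ (f p).1 = 4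

/-- The global invariant: phase description of the protocol. -/
def PhaseInv (L : Fin n) (s : TS n r) (V : Fin n → Fin r → Prop) : Prop :=
  ((s.loc L).1 = 0 ∧ (∀ p, p ≠ L → (s.loc p).1 = 0) ∧ s.declared = false ∧
     ∃ S : Finset (Fin r), S.card = (s.loc L).2 ∧ S.card < r ∧ Rooms01 s.rooms S ∧
       ∀ rm ∈ S, V L rm)
  ∨ ((s.loc L).1 = 1 ∧ (∀ p, p ≠ L → (s.loc p).1 = 0) ∧ s.declared = false ∧
     ∃ S : Finset (Fin r), S.card = (s.loc L).2 ∧ S.card < r ∧ Rooms10 s.rooms S)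
  ∨ ((s.loc L).1 = 2 ∧ (∀ p, p ≠ L → (s.loc p).1 = 0) ∧ s.declared = false ∧
     ∀ rm, s.rooms rm = C4.zero)
  ∨ ((s.loc L).1 = 3 ∧ (s.loc L).2 < n ∧ s.declared = false ∧
     (((doneF L s.loc).card = (s.loc L).2 ∧ (∀ p, p ≠ L → IdleF s.loc p) ∧
        ∃ x, RoomsTok s.rooms x C4.next)
      ∨ ((doneF L s.loc).card + 1 = (s.loc L).2 ∧ (∀ p, p ≠ L → IdleF s.loc p) ∧
        ∃ x, RoomsTok s.rooms x C4.ready)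
      ∨ ((doneF L s.loc).card + 1 = (s.loc L).2 ∧ ∃ q, q ≠ L ∧ (s.loc q).1 = 1 ∧
           (∀ p, p ≠ L → p ≠ q → IdleF s.loc p) ∧
           ∃ S : Finset (Fin r), S.card = (s.loc q).2 ∧ S.card < r ∧ Rooms01 s.rooms S ∧
             ∀ rm ∈ S, V q rm)
      ∨ ((doneF L s.loc).card + 1 = (s.loc L).2 ∧ ∃ q, q ≠ L ∧ (s.loc q).1 = 2 ∧
           (∀ p, p ≠ L → p ≠ q → IdleF s.loc p) ∧
           ∃ S : Finset (Fin r), S.card = (s.loc q).2 ∧ S.card < r ∧ Rooms10 s.rooms S)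
      ∨ ((doneF L s.loc).card + 1 = (s.loc L).2 ∧ ∃ q, q ≠ L ∧ (s.loc q).1 = 3 ∧
           (∀ p, p ≠ L → p ≠ q → IdleF s.loc p) ∧ ∀ rm, s.rooms rm = C4.zero)))
  ∨ ((s.loc L).1 = 4 ∧ (∀ p, p ≠ L → (s.loc p).1 = 4))

structure TSInv (L : Fin n) (sch : ℕ → Fin n × Fin r) (t : ℕ) : Prop where
  visL : 1 ≤ ((tsRun L sch t).loc L).1 → ∀ rm, tsVis sch t L rm
  visO : ∀ p, p ≠ L → 2 ≤ ((tsRun L sch t).loc p).1 → ∀ rm, tsVis sch t p rm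
  ph : PhaseInv L (tsRun L sch t) (tsVis sch t)

lemma phase_mono {L : Fin n} {s : TS n r} {V V' : Fin n → Fin r → Prop}
    (hV : ∀ p rm, V p rm → V' p rm) (h : PhaseInv L s V) : PhaseInv L s V' := by
  unfold PhaseInv at h ⊢
  rcases h with ⟨a, b, c, S, d, e, f, g⟩ | h | h | ⟨a, b, c, hsub⟩ | h
  · exact Or.inl ⟨a, b, c, S, d, e, f, fun rm hrm => hV _ _ (g rm hrm)⟩
  · exact Or.inr (Or.inl h)
  · exact Or.inr (Or.inr (Or.inl h))
  · refine Or.inr (Or.inr (Or.inr (Or.inl ⟨a, b, c, ?_⟩)))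
    rcases hsub with h | h | ⟨hk, q, h1, h2, h3, S, d, e, f, g⟩ | h | h
    · exact Or.inl h
    · exact Or.inr (Or.inl h)
    · exact Or.inr (Or.inr (Or.inl ⟨hk, q, h1, h2, h3, S, d, e, f,
        fun rm hrm => hV _ _ (g rm hrm)⟩))
    · exact Or.inr (Or.inr (Or.inr (Or.inl h)))
    · exact Or.inr (Or.inr (Or.inr (Or.inr h)))
  · exact Or.inr (Or.inr (Or.inr (Or.inr h)))

lemma tsStep_noop {L : Fin n} {p : Fin n} {x : Fin r} {s : TS n r}
    (h : (if p = L then leaderAct r n (s.loc p) (s.rooms x)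
          else otherAct r (s.loc p) (s.rooms x)) = (s.loc p, s.rooms x, false)) :
    tsStep L (p, x) s = s := by
  obtain ⟨R, f, d⟩ := s
  simp only [tsStep] at h ⊢
  rw [h]
  simp [Function.update_eq_self]

lemma tsStep_eq {L : Fin n} {p : Fin n} {x : Fin r} {s : TS n r}
    {st' : ℕ × ℕ} {c' : C4} {b : Bool}
    (h : (if p = L then leaderAct r n (s.loc p) (s.rooms x)
          else otherAct r (s.loc p) (s.rooms x)) = (st', c', b)) :
    tsStep L (p, x) s = ⟨Function.update s.rooms x c', Function.update s.loc p st',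
      s.declared || b⟩ := by
  simp only [tsStep, h]

lemma tsinv_succ_of_eq {L : Fin n} {sch : ℕ → Fin n × Fin r} {t : ℕ}
    (h : TSInv L sch t) (he : tsRun L sch (t + 1) = tsRun L sch t) : TSInv L sch (t + 1) := by
  refine ⟨?_, ?_, ?_⟩
  · rw [he]; exact fun h1 rm => tsVis_mono (h.visL h1 rm)
  · rw [he]; exact fun p hp h2 rm => tsVis_mono (h.visO p hp h2 rm)
  · rw [he]; exact phase_mono (fun p rm => tsVis_mono) h.ph

lemma leaderAct_noop {st : ℕ × ℕ} {c : C4}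
    (h0 : st.1 = 0 → c ≠ C4.zero) (h1 : st.1 = 1 → c ≠ C4.one)
    (h2 : st.1 = 2 → c ≠ C4.zero) (h3 : st.1 = 3 → c ≠ C4.next) :
    leaderAct r n st c = (st, c, false) := by
  obtain ⟨l, m⟩ := st
  rcases l with _ | _ | _ | _ | l <;> simp_all [leaderAct]

lemma otherAct_noop {st : ℕ × ℕ} {c : C4}
    (h0 : st.1 = 0 → c ≠ C4.ready) (h1 : st.1 = 1 → c ≠ C4.zero)
    (h2 : st.1 = 2 → c ≠ C4.one) (h3 : st.1 = 3 → c ≠ C4.zero) :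
    otherAct r st c = (st, c, false) := by
  obtain ⟨l, m⟩ := st
  rcases l with _ | _ | _ | _ | l <;> simp_all [otherAct]

end TwoSwitchAux
section TwoSwitchStep

open Finset

variable {n r : ℕ}

lemma tsinv_step (hn : 1 < n) (hr : 0 < r) (L : Fin n) (sch : ℕ → Fin n × Fin r) (t : ℕ)
    (h : TSInv L sch t) : TSInv L sch (t + 1) := by
  obtain ⟨vL, vO, ph⟩ := h
  obtain ⟨⟨p, x⟩, hv⟩ : ∃ v, sch t = v := ⟨_, rfl⟩
  set s := tsRun L sch t with hsdef
  have hrun : tsRun L sch (t + 1) = tsStep L (p, x) s := by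
    rw [show tsRun L sch (t + 1) = tsStep L (sch t) s from rfl, hv]
  have noop : (if p = L then leaderAct r n (s.loc p) (s.rooms x)
      else otherAct r (s.loc p) (s.rooms x)) = (s.loc p, s.rooms x, false) →
      TSInv L sch (t + 1) := fun hA =>
    tsinv_succ_of_eq ⟨vL, vO, ph⟩ (by rw [hrun, tsStep_noop hA])
  have mkstep : ∀ {st' : ℕ × ℕ} {c' : C4} {b : Bool},
      (if p = L then leaderAct r n (s.loc p) (s.rooms x)
        else otherAct r (s.loc p) (s.rooms x)) = (st', c', b) →
      (tsRun L sch (t + 1)).rooms = Function.update s.rooms x c' ∧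
      (tsRun L sch (t + 1)).loc = Function.update s.loc p st' ∧
      (tsRun L sch (t + 1)).declared = (s.declared || b) := fun hA => by
    rw [hrun, tsStep_eq hA]; exact ⟨rfl, rfl, rfl⟩
  have newvisit : ∀ q rm, p = q → x = rm → tsVis sch (t + 1) q rm := by
    intro q rm h1 h2; exact ⟨t, Nat.lt_succ_self t, by rw [hv, h1, h2]⟩
  have cardlt : ∀ (T : Finset (Fin r)), T.card ≤ r := by
    intro T
    simpa using Finset.card_le_univ T
  rcases ph with ⟨hL0, hO, hd, S, hSc, hSlt, h01, hV⟩ | ⟨hL1, hO, hd, S, hSc, hSlt, h10⟩ |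
    ⟨hL2, hO, hd, hz⟩ | ⟨hL3, hcn, hd, hsub⟩ | ⟨hL4, hO4⟩
  · -- P0
    by_cases hpL : p = L
    · by_cases hxS : x ∈ S
      · exact noop (by rw [if_pos hpL, hpL]; exact leaderAct_noop (fun _ => by simp [h01 x, hxS]) (by simp [hL0]) (by simp [hL0]) (by simp [hL0]))
      · have hz0 : s.rooms x = C4.zero := by rw [h01 x, if_neg hxS]
        have hqp : ∀ q : Fin n, q ≠ L → q ≠ p := fun q hq => by rw [hpL]; exact hq
        by_cases hcr : (s.loc L).2 + 1 = r
        · have ha : (if p = L then leaderAct r n (s.loc p) (s.rooms x)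
              else otherAct r (s.loc p) (s.rooms x)) = ((1, 0), C4.one, false) := by
            rw [if_pos hpL, hpL]; simp [leaderAct, hL0, hz0, hcr]
          obtain ⟨hR', hL', hD'⟩ := mkstep ha
          have huniv : insert x S = Finset.univ :=
            insert_eq_univ_of_card hxS (by omega)
          have hvall : ∀ rm, tsVis sch (t + 1) L rm := by
            intro rm
            have hmem : rm ∈ insert x S := huniv ▸ Finset.mem_univ rm
            rcases Finset.mem_insert.mp hmem with hrm | hrm
            · exact newvisit L rm hpL hrm.symm
            · exact tsVis_mono (hV rm hrm)
          refine ⟨fun _ => hvall, ?_, ?_⟩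
          · intro q hq h2 rm
            rw [hL', Function.update_of_ne (hqp q hq), hO q hq] at h2
            exact absurd h2 (by omega)
          · refine Or.inr (Or.inl ⟨?_, ?_, ?_, ∅, ?_, hr, ?_⟩)
            · rw [hL', hpL, Function.update_self]
            · intro q hq
              rw [hL', Function.update_of_ne (hqp q hq)]
              exact hO q hq
            · simp [hD', hd]
            · rw [hL', hpL, Function.update_self]; simp
            · intro rm
              rw [hR']
              simp only [Finset.notMem_empty, if_false]
              rcases eq_or_ne rm x with hrm | hrm
              · rw [hrm, Function.update_self]
              · rw [Function.update_of_ne hrm, h01 rm, if_pos ?_]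
                have hmem : rm ∈ insert x S := huniv ▸ Finset.mem_univ rm
                exact (Finset.mem_insert.mp hmem).resolve_left hrm
        · have ha : (if p = L then leaderAct r n (s.loc p) (s.rooms x)
              else otherAct r (s.loc p) (s.rooms x)) = ((0, (s.loc L).2 + 1), C4.one, false) := by
            rw [if_pos hpL, hpL]; simp [leaderAct, hL0, hz0, hcr]
          obtain ⟨hR', hL', hD'⟩ := mkstep ha
          have hcard : (insert x S).card = (s.loc L).2 + 1 := by
            rw [Finset.card_insert_of_notMem hxS, hSc]
          refine ⟨?_, ?_, ?_⟩
          · intro h1 rm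
            rw [hL', hpL, Function.update_self] at h1
            exact absurd h1 (by omega)
          · intro q hq h2 rm
            rw [hL', Function.update_of_ne (hqp q hq), hO q hq] at h2
            exact absurd h2 (by omega)
          · refine Or.inl ⟨?_, ?_, ?_, insert x S, ?_, by have := cardlt (insert x S); omega, ?_, ?_⟩
            · rw [hL', hpL, Function.update_self]
            · intro q hq
              rw [hL', Function.update_of_ne (hqp q hq)]
              exact hO q hq
            · simp [hD', hd]
            · rw [hL', hpL, Function.update_self, hcard]
            · rw [hR']; exact Rooms01_insert h01
            · intro rm hrm
              rcases Finset.mem_insert.mp hrm with h | h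
              · exact newvisit L rm hpL h.symm
              · exact tsVis_mono (hV rm h)
    · exact noop (by rw [if_neg hpL]; exact otherAct_noop (fun _ => by rcases Rooms01_cases h01 x with h | h <;> simp [h]) (by simp [hO p hpL]) (by simp [hO p hpL]) (by simp [hO p hpL]))
  · -- P1
    by_cases hpL : p = L
    · by_cases hxS : x ∈ S
      · exact noop (by rw [if_pos hpL, hpL]; exact leaderAct_noop (by simp [hL1]) (fun _ => by simp [h10 x, hxS]) (by simp [hL1]) (by simp [hL1]))
      · have hz0 : s.rooms x = C4.one := by rw [h10 x, if_neg hxS]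
        have hqp : ∀ q : Fin n, q ≠ L → q ≠ p := fun q hq => by rw [hpL]; exact hq
        have hvall : ∀ rm, tsVis sch (t + 1) L rm := fun rm =>
          tsVis_mono (vL (by omega) rm)
        by_cases hcr : (s.loc L).2 + 1 = r
        · have ha : (if p = L then leaderAct r n (s.loc p) (s.rooms x)
              else otherAct r (s.loc p) (s.rooms x)) = ((2, 0), C4.zero, false) := by
            rw [if_pos hpL, hpL]; simp [leaderAct, hL1, hz0, hcr]
          obtain ⟨hR', hL', hD'⟩ := mkstep ha
          have huniv : insert x S = Finset.univ :=
            insert_eq_univ_of_card hxS (by omega)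
          refine ⟨fun _ => hvall, ?_, ?_⟩
          · intro q hq h2 rm
            rw [hL', Function.update_of_ne (hqp q hq), hO q hq] at h2
            exact absurd h2 (by omega)
          · refine Or.inr (Or.inr (Or.inl ⟨?_, ?_, ?_, ?_⟩))
            · rw [hL', hpL, Function.update_self]
            · intro q hq
              rw [hL', Function.update_of_ne (hqp q hq)]
              exact hO q hq
            · simp [hD', hd]
            · intro rm
              rw [hR']
              rcases eq_or_ne rm x with hrm | hrm
              · rw [hrm, Function.update_self]
              · rw [Function.update_of_ne hrm, h10 rm, if_pos ?_]
                have hmem : rm ∈ insert x S := huniv ▸ Finset.mem_univ rm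
                exact (Finset.mem_insert.mp hmem).resolve_left hrm
        · have ha : (if p = L then leaderAct r n (s.loc p) (s.rooms x)
              else otherAct r (s.loc p) (s.rooms x)) = ((1, (s.loc L).2 + 1), C4.zero, false) := by
            rw [if_pos hpL, hpL]; simp [leaderAct, hL1, hz0, hcr]
          obtain ⟨hR', hL', hD'⟩ := mkstep ha
          have hcard : (insert x S).card = (s.loc L).2 + 1 := by
            rw [Finset.card_insert_of_notMem hxS, hSc]
          refine ⟨fun _ => hvall, ?_, ?_⟩
          · intro q hq h2 rm
            rw [hL', Function.update_of_ne (hqp q hq), hO q hq] at h2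
            exact absurd h2 (by omega)
          · refine Or.inr (Or.inl ⟨?_, ?_, ?_, insert x S, ?_,
              by have := cardlt (insert x S); omega, ?_⟩)
            · rw [hL', hpL, Function.update_self]
            · intro q hq
              rw [hL', Function.update_of_ne (hqp q hq)]
              exact hO q hq
            · simp [hD', hd]
            · rw [hL', hpL, Function.update_self, hcard]
            · rw [hR']; exact Rooms10_insert h10
    · exact noop (by rw [if_neg hpL]; exact otherAct_noop (fun _ => by rcases Rooms10_cases h10 x with h | h <;> simp [h]) (by simp [hO p hpL]) (by simp [hO p hpL]) (by simp [hO p hpL]))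
  · -- P2
    by_cases hpL : p = L
    · have hqp : ∀ q : Fin n, q ≠ L → q ≠ p := fun q hq => by rw [hpL]; exact hq
      have ha : (if p = L then leaderAct r n (s.loc p) (s.rooms x)
          else otherAct r (s.loc p) (s.rooms x)) = ((3, 0), C4.next, false) := by
        rw [if_pos hpL, hpL]; simp [leaderAct, hL2, hz x]
      obtain ⟨hR', hL', hD'⟩ := mkstep ha
      have hvall : ∀ rm, tsVis sch (t + 1) L rm := fun rm =>
        tsVis_mono (vL (by omega) rm)
      have hdone : doneF L (Function.update s.loc p (3, 0)) = ∅ := by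
        ext q
        simp only [mem_doneF, Finset.notMem_empty, iff_false, not_and]
        intro hq
        rw [Function.update_of_ne (hqp q hq), hO q hq]
        omega
      refine ⟨fun _ => hvall, ?_, ?_⟩
      · intro q hq h2 rm
        rw [hL', Function.update_of_ne (hqp q hq), hO q hq] at h2
        exact absurd h2 (by omega)
      · refine Or.inr (Or.inr (Or.inr (Or.inl ⟨?_, ?_, ?_, Or.inl ⟨?_, ?_, x, ?_⟩⟩)))
        · rw [hL', hpL, Function.update_self]
        · rw [hL', hpL, Function.update_self]; omega
        · simp [hD', hd]
        · rw [hL', hdone, hpL, Function.update_self]; simp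
        · intro q hq
          rw [hL']
          left
          rw [Function.update_of_ne (hqp q hq)]
          exact hO q hq
        · intro rm
          rw [hR']
          rcases eq_or_ne rm x with hrm | hrm
          · rw [hrm, Function.update_self, if_pos rfl]
          · rw [Function.update_of_ne hrm, if_neg hrm, hz rm]
    · exact noop (by rw [if_neg hpL]; exact otherAct_noop (fun _ => by simp [hz x]) (by simp [hO p hpL]) (by simp [hO p hpL]) (by simp [hO p hpL]))
  · -- P3
    rcases hsub with ⟨hk, hidle, x₀, htok⟩ | ⟨hk, hidle, x₀, htok⟩ |
      ⟨hk, q, hqL, hq1, hid, S, hSc, hSlt, h01, hV⟩ |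
      ⟨hk, q, hqL, hq2, hid, S, hSc, hSlt, h10⟩ | ⟨hk, q, hqL, hq3, hid, hz⟩
    · -- P3 alpha
      by_cases hpL : p = L
      · by_cases hxx : x = x₀
        · subst hxx
          have hqp : ∀ q : Fin n, q ≠ L → q ≠ p := fun q hq => by rw [hpL]; exact hq
          have hnx : s.rooms x = C4.next := by rw [htok x, if_pos rfl]
          have hvall : ∀ rm, tsVis sch (t + 1) L rm := fun rm =>
            tsVis_mono (vL (by omega) rm)
          by_cases hcn' : (s.loc L).2 + 1 = n
          · have ha : (if p = L then leaderAct r n (s.loc p) (s.rooms x)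
                else otherAct r (s.loc p) (s.rooms x)) = ((4, 0), C4.ready, true) := by
              rw [if_pos hpL, hpL]; simp [leaderAct, hL3, hnx, hcn']
            obtain ⟨hR', hL', hD'⟩ := mkstep ha
            have hdsub : doneF L s.loc ⊆ Finset.univ.erase L := by
              intro q hq
              exact Finset.mem_erase.mpr ⟨(mem_doneF.mp hq).1, Finset.mem_univ q⟩
            have hderase : (Finset.univ.erase L).card = n - 1 := by
              rw [Finset.card_erase_of_mem (Finset.mem_univ L), Finset.card_univ,
                Fintype.card_fin]
            have hdeq : doneF L s.loc = Finset.univ.erase L :=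
              Finset.eq_of_subset_of_card_le hdsub (by rw [hderase, hk]; omega)
            have hall4 : ∀ q, q ≠ L → (s.loc q).1 = 4 := by
              intro q hq
              have hmem : q ∈ doneF L s.loc := hdeq ▸ Finset.mem_erase.mpr ⟨hq, Finset.mem_univ q⟩
              exact (mem_doneF.mp hmem).2
            refine ⟨fun _ => hvall, ?_, ?_⟩
            · intro q hq h2 rm
              rw [hL', Function.update_of_ne (hqp q hq)] at h2
              exact tsVis_mono (vO q hq h2 rm)
            · refine Or.inr (Or.inr (Or.inr (Or.inr ⟨?_, ?_⟩)))
              · rw [hL', hpL, Function.update_self]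
              · intro q hq
                rw [hL', Function.update_of_ne (hqp q hq)]
                exact hall4 q hq
          · have ha : (if p = L then leaderAct r n (s.loc p) (s.rooms x)
                else otherAct r (s.loc p) (s.rooms x)) = ((3, (s.loc L).2 + 1), C4.ready, false) := by
              rw [if_pos hpL, hpL]; simp [leaderAct, hL3, hnx, hcn']
            obtain ⟨hR', hL', hD'⟩ := mkstep ha
            refine ⟨fun _ => hvall, ?_, ?_⟩
            · intro q hq h2 rm
              rw [hL', Function.update_of_ne (hqp q hq)] at h2
              exact tsVis_mono (vO q hq h2 rm)
            · refine Or.inr (Or.inr (Or.inr (Or.inl ⟨?_, ?_, ?_,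
                Or.inr (Or.inl ⟨?_, ?_, x, ?_⟩)⟩)))
              · rw [hL', hpL, Function.update_self]
              · rw [hL', hpL, Function.update_self]; omega
              · simp [hD', hd]
              · rw [hL', hpL, Function.update_self, doneF_update_L, hk]
              · intro q hq
                rw [hL']
                have := hidle q hq
                unfold IdleF at this ⊢
                rw [hpL, Function.update_of_ne (by rw [← hpL]; exact hqp q hq)]
                exact this
              · intro rm
                rw [hR']
                rcases eq_or_ne rm x with hrm | hrm
                · rw [hrm, Function.update_self, if_pos rfl]
                · rw [Function.update_of_ne hrm, if_neg hrm, htok rm, if_neg hrm]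
        · exact noop (by rw [if_pos hpL, hpL]; exact leaderAct_noop (by simp [hL3]) (by simp [hL3]) (by simp [hL3]) (fun _ => by simp [htok x, hxx]))
      · rcases hidle p hpL with h0 | h4
        · exact noop (by rw [if_neg hpL]; exact otherAct_noop (fun _ => by rcases RoomsTok_cases htok x with h | h <;> simp [h]) (by simp [h0]) (by simp [h0]) (by simp [h0]))
        · exact noop (by rw [if_neg hpL]; exact otherAct_noop (by simp [h4]) (by simp [h4]) (by simp [h4]) (by simp [h4]))
    · -- P3 beta
      by_cases hpL : p = L
      · exact noop (by rw [if_pos hpL, hpL]; exact leaderAct_noop (by simp [hL3]) (by simp [hL3]) (by simp [hL3]) (fun _ => by rcases RoomsTok_cases htok x with h | h <;> simp [h]))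
      · rcases hidle p hpL with h0 | h4
        · by_cases hxx : x = x₀
          · subst hxx
            have hLp : L ≠ p := fun h => hpL h.symm
            have hready : s.rooms x = C4.ready := by rw [htok x, if_pos rfl]
            have ha : (if p = L then leaderAct r n (s.loc p) (s.rooms x)
                else otherAct r (s.loc p) (s.rooms x)) = ((1, 0), C4.zero, false) := by
              rw [if_neg hpL]; simp [otherAct, h0, hready]
            obtain ⟨hR', hL', hD'⟩ := mkstep ha
            refine ⟨?_, ?_, ?_⟩
            · rw [hL', Function.update_of_ne hLp]
              exact fun h1 rm => tsVis_mono (vL h1 rm)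
            · intro q hq h2 rm
              rw [hL', Function.update_apply] at h2
              rcases eq_or_ne q p with hqp | hqp
              · rw [if_pos hqp] at h2
                exact absurd h2 (by omega)
              · rw [if_neg hqp] at h2
                exact tsVis_mono (vO q hq h2 rm)
            · refine Or.inr (Or.inr (Or.inr (Or.inl ⟨?_, ?_, ?_,
                Or.inr (Or.inr (Or.inl ⟨?_, p, hpL, ?_, ?_, ∅, ?_, hr, ?_, ?_⟩))⟩)))
              · rw [hL', Function.update_of_ne hLp]; exact hL3
              · rw [hL', Function.update_of_ne hLp]; exact hcn
              · simp [hD', hd]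
              · rw [hL', doneF_update_ne4 (by simp) (by rw [h0]; omega),
                  Function.update_of_ne hLp]
                exact hk
              · rw [hL', Function.update_self]
              · intro q hq hqp
                rw [hL']
                unfold IdleF
                rw [Function.update_of_ne hqp]
                exact hidle q hq
              · rw [hL', Function.update_self]; simp
              · intro rm
                rw [hR']
                simp only [Finset.notMem_empty, if_false]
                rcases eq_or_ne rm x with hrm | hrm
                · rw [hrm, Function.update_self]
                · rw [Function.update_of_ne hrm, htok rm, if_neg hrm]
              · exact fun rm hrm => absurd hrm (Finset.notMem_empty rm)
          · exact noop (by rw [if_neg hpL]; exact otherAct_noop (fun _ => by simp [htok x, hxx]) (by simp [h0]) (by simp [h0]) (by simp [h0]))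
        · exact noop (by rw [if_neg hpL]; exact otherAct_noop (by simp [h4]) (by simp [h4]) (by simp [h4]) (by simp [h4]))
    · -- P3 gamma
      by_cases hpL : p = L
      · exact noop (by rw [if_pos hpL, hpL]; exact leaderAct_noop (by simp [hL3]) (by simp [hL3]) (by simp [hL3]) (fun _ => by rcases Rooms01_cases h01 x with h | h <;> simp [h]))
      · by_cases hpq : p = q
        · by_cases hxS : x ∈ S
          · exact noop (by rw [if_neg hpL]; exact otherAct_noop (by simp [hpq, hq1]) (fun _ => by simp [h01 x, hxS]) (by simp [hpq, hq1]) (by simp [hpq, hq1]))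
          · subst hpq
            have hLp : L ≠ p := fun h => hpL h.symm
            have hz0 : s.rooms x = C4.zero := by rw [h01 x, if_neg hxS]
            by_cases hcr : (s.loc p).2 + 1 = r
            · have ha : (if p = L then leaderAct r n (s.loc p) (s.rooms x)
                  else otherAct r (s.loc p) (s.rooms x)) = ((2, 0), C4.one, false) := by
                rw [if_neg hpL]; simp [otherAct, hq1, hz0, hcr]
              obtain ⟨hR', hL', hD'⟩ := mkstep ha
              have huniv : insert x S = Finset.univ := insert_eq_univ_of_card hxS (by omega)
              have hvallp : ∀ rm, tsVis sch (t + 1) p rm := by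
                intro rm
                have hmem : rm ∈ insert x S := huniv ▸ Finset.mem_univ rm
                rcases Finset.mem_insert.mp hmem with hrm | hrm
                · exact newvisit p rm rfl hrm.symm
                · exact tsVis_mono (hV rm hrm)
              refine ⟨?_, ?_, ?_⟩
              · rw [hL', Function.update_of_ne hLp]
                exact fun h1 rm => tsVis_mono (vL h1 rm)
              · intro q hq h2 rm
                rcases eq_or_ne q p with hqp2 | hqp2
                · subst hqp2; exact hvallp rm
                · rw [hL', Function.update_of_ne hqp2] at h2
                  exact tsVis_mono (vO q hq h2 rm)
              · refine Or.inr (Or.inr (Or.inr (Or.inl ⟨?_, ?_, ?_,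
                  Or.inr (Or.inr (Or.inr (Or.inl ⟨?_, p, hpL, ?_, ?_, ∅, ?_, hr, ?_⟩)))⟩)))
                · rw [hL', Function.update_of_ne hLp]; exact hL3
                · rw [hL', Function.update_of_ne hLp]; exact hcn
                · simp [hD', hd]
                · rw [hL', doneF_update_ne4 (by simp) (by rw [hq1]; omega), Function.update_of_ne hLp]
                  exact hk
                · rw [hL', Function.update_self]
                · intro q hq hqp2
                  rw [hL']
                  unfold IdleF
                  rw [Function.update_of_ne hqp2]
                  exact hid q hq hqp2
                · rw [hL', Function.update_self]; simp
                · intro rm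
                  rw [hR']
                  simp only [Finset.notMem_empty, if_false]
                  rcases eq_or_ne rm x with hrm | hrm
                  · rw [hrm, Function.update_self]
                  · rw [Function.update_of_ne hrm, h01 rm, if_pos ?_]
                    have hmem : rm ∈ insert x S := huniv ▸ Finset.mem_univ rm
                    exact (Finset.mem_insert.mp hmem).resolve_left hrm
            · have ha : (if p = L then leaderAct r n (s.loc p) (s.rooms x)
                  else otherAct r (s.loc p) (s.rooms x)) = ((1, (s.loc p).2 + 1), C4.one, false) := by
                rw [if_neg hpL]; simp [otherAct, hq1, hz0, hcr]
              obtain ⟨hR', hL', hD'⟩ := mkstep ha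
              have hcard : (insert x S).card = (s.loc p).2 + 1 := by
                rw [Finset.card_insert_of_notMem hxS, hSc]
              refine ⟨?_, ?_, ?_⟩
              · rw [hL', Function.update_of_ne hLp]
                exact fun h1 rm => tsVis_mono (vL h1 rm)
              · intro q hq h2 rm
                rcases eq_or_ne q p with hqp2 | hqp2
                · subst hqp2
                  rw [hL', Function.update_self] at h2
                  exact absurd h2 (by omega)
                · rw [hL', Function.update_of_ne hqp2] at h2
                  exact tsVis_mono (vO q hq h2 rm)
              · refine Or.inr (Or.inr (Or.inr (Or.inl ⟨?_, ?_, ?_,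
                  Or.inr (Or.inr (Or.inl ⟨?_, p, hpL, ?_, ?_, insert x S, ?_,
                    by have := cardlt (insert x S); omega, ?_, ?_⟩))⟩)))
                · rw [hL', Function.update_of_ne hLp]; exact hL3
                · rw [hL', Function.update_of_ne hLp]; exact hcn
                · simp [hD', hd]
                · rw [hL', doneF_update_ne4 (by simp) (by rw [hq1]; omega), Function.update_of_ne hLp]
                  exact hk
                · rw [hL', Function.update_self]
                · intro q hq hqp2
                  rw [hL']
                  unfold IdleF
                  rw [Function.update_of_ne hqp2]
                  exact hid q hq hqp2
                · rw [hL', Function.update_self, hcard]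
                · rw [hR']; exact Rooms01_insert h01
                · intro rm hrm
                  rcases Finset.mem_insert.mp hrm with hrm2 | hrm2
                  · exact newvisit p rm rfl hrm2.symm
                  · exact tsVis_mono (hV rm hrm2)
        · rcases hid p hpL hpq with h0 | h4
          · exact noop (by rw [if_neg hpL]; exact otherAct_noop (fun _ => by rcases Rooms01_cases h01 x with h | h <;> simp [h]) (by simp [h0]) (by simp [h0]) (by simp [h0]))
          · exact noop (by rw [if_neg hpL]; exact otherAct_noop (by simp [h4]) (by simp [h4]) (by simp [h4]) (by simp [h4]))
    · -- P3 delta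
      by_cases hpL : p = L
      · exact noop (by rw [if_pos hpL, hpL]; exact leaderAct_noop (by simp [hL3]) (by simp [hL3]) (by simp [hL3]) (fun _ => by rcases Rooms10_cases h10 x with h | h <;> simp [h]))
      · by_cases hpq : p = q
        · by_cases hxS : x ∈ S
          · exact noop (by rw [if_neg hpL]; exact otherAct_noop (by simp [hpq, hq2]) (by simp [hpq, hq2]) (fun _ => by simp [h10 x, hxS]) (by simp [hpq, hq2]))
          · subst hpq
            have hLp : L ≠ p := fun h => hpL h.symm
            have hz0 : s.rooms x = C4.one := by rw [h10 x, if_neg hxS]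
            have hvallp : ∀ rm, tsVis sch (t + 1) p rm := fun rm =>
              tsVis_mono (vO p hpL (by omega) rm)
            by_cases hcr : (s.loc p).2 + 1 = r
            · have ha : (if p = L then leaderAct r n (s.loc p) (s.rooms x)
                  else otherAct r (s.loc p) (s.rooms x)) = ((3, 0), C4.zero, false) := by
                rw [if_neg hpL]; simp [otherAct, hq2, hz0, hcr]
              obtain ⟨hR', hL', hD'⟩ := mkstep ha
              have huniv : insert x S = Finset.univ := insert_eq_univ_of_card hxS (by omega)
              refine ⟨?_, ?_, ?_⟩
              · rw [hL', Function.update_of_ne hLp]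
                exact fun h1 rm => tsVis_mono (vL h1 rm)
              · intro q hq h2 rm
                rcases eq_or_ne q p with hqp2 | hqp2
                · subst hqp2; exact hvallp rm
                · rw [hL', Function.update_of_ne hqp2] at h2
                  exact tsVis_mono (vO q hq h2 rm)
              · refine Or.inr (Or.inr (Or.inr (Or.inl ⟨?_, ?_, ?_,
                  Or.inr (Or.inr (Or.inr (Or.inr ⟨?_, p, hpL, ?_, ?_, ?_⟩)))⟩)))
                · rw [hL', Function.update_of_ne hLp]; exact hL3
                · rw [hL', Function.update_of_ne hLp]; exact hcn
                · simp [hD', hd]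
                · rw [hL', doneF_update_ne4 (by simp) (by rw [hq2]; omega), Function.update_of_ne hLp]
                  exact hk
                · rw [hL', Function.update_self]
                · intro q hq hqp2
                  rw [hL']
                  unfold IdleF
                  rw [Function.update_of_ne hqp2]
                  exact hid q hq hqp2
                · intro rm
                  rw [hR']
                  rcases eq_or_ne rm x with hrm | hrm
                  · rw [hrm, Function.update_self]
                  · rw [Function.update_of_ne hrm, h10 rm, if_pos ?_]
                    have hmem : rm ∈ insert x S := huniv ▸ Finset.mem_univ rm
                    exact (Finset.mem_insert.mp hmem).resolve_left hrm
            · have ha : (if p = L then leaderAct r n (s.loc p) (s.rooms x)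
                  else otherAct r (s.loc p) (s.rooms x)) = ((2, (s.loc p).2 + 1), C4.zero, false) := by
                rw [if_neg hpL]; simp [otherAct, hq2, hz0, hcr]
              obtain ⟨hR', hL', hD'⟩ := mkstep ha
              have hcard : (insert x S).card = (s.loc p).2 + 1 := by
                rw [Finset.card_insert_of_notMem hxS, hSc]
              refine ⟨?_, ?_, ?_⟩
              · rw [hL', Function.update_of_ne hLp]
                exact fun h1 rm => tsVis_mono (vL h1 rm)
              · intro q hq h2 rm
                rcases eq_or_ne q p with hqp2 | hqp2
                · subst hqp2; exact hvallp rm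
                · rw [hL', Function.update_of_ne hqp2] at h2
                  exact tsVis_mono (vO q hq h2 rm)
              · refine Or.inr (Or.inr (Or.inr (Or.inl ⟨?_, ?_, ?_,
                  Or.inr (Or.inr (Or.inr (Or.inl ⟨?_, p, hpL, ?_, ?_, insert x S, ?_,
                    by have := cardlt (insert x S); omega, ?_⟩)))⟩)))
                · rw [hL', Function.update_of_ne hLp]; exact hL3
                · rw [hL', Function.update_of_ne hLp]; exact hcn
                · simp [hD', hd]
                · rw [hL', doneF_update_ne4 (by simp) (by rw [hq2]; omega), Function.update_of_ne hLp]
                  exact hk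
                · rw [hL', Function.update_self]
                · intro q hq hqp2
                  rw [hL']
                  unfold IdleF
                  rw [Function.update_of_ne hqp2]
                  exact hid q hq hqp2
                · rw [hL', Function.update_self, hcard]
                · rw [hR']; exact Rooms10_insert h10
        · rcases hid p hpL hpq with h0 | h4
          · exact noop (by rw [if_neg hpL]; exact otherAct_noop (fun _ => by rcases Rooms10_cases h10 x with h | h <;> simp [h]) (by simp [h0]) (by simp [h0]) (by simp [h0]))
          · exact noop (by rw [if_neg hpL]; exact otherAct_noop (by simp [h4]) (by simp [h4]) (by simp [h4]) (by simp [h4]))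
    · -- P3 epsilon
      by_cases hpL : p = L
      · exact noop (by rw [if_pos hpL, hpL]; exact leaderAct_noop (by simp [hL3]) (by simp [hL3]) (by simp [hL3]) (fun _ => by simp [hz x]))
      · by_cases hpq : p = q
        · subst hpq
          have hLp : L ≠ p := fun h => hpL h.symm
          have hvallp : ∀ rm, tsVis sch (t + 1) p rm := fun rm =>
            tsVis_mono (vO p hpL (by omega) rm)
          have hnotin : p ∉ doneF L s.loc := by
            simp [mem_doneF, hq3]
          have ha : (if p = L then leaderAct r n (s.loc p) (s.rooms x)
              else otherAct r (s.loc p) (s.rooms x)) = ((4, 0), C4.next, false) := by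
            rw [if_neg hpL]; simp [otherAct, hq3, hz x]
          obtain ⟨hR', hL', hD'⟩ := mkstep ha
          refine ⟨?_, ?_, ?_⟩
          · rw [hL', Function.update_of_ne hLp]
            exact fun h1 rm => tsVis_mono (vL h1 rm)
          · intro q hq h2 rm
            rcases eq_or_ne q p with hqp2 | hqp2
            · subst hqp2; exact hvallp rm
            · rw [hL', Function.update_of_ne hqp2] at h2
              exact tsVis_mono (vO q hq h2 rm)
          · refine Or.inr (Or.inr (Or.inr (Or.inl ⟨?_, ?_, ?_, Or.inl ⟨?_, ?_, x, ?_⟩⟩)))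
            · rw [hL', Function.update_of_ne hLp]; exact hL3
            · rw [hL', Function.update_of_ne hLp]; exact hcn
            · simp [hD', hd]
            · rw [hL', doneF_update_to4 hpL rfl, Finset.card_insert_of_notMem hnotin,
                Function.update_of_ne hLp]
              exact hk
            · intro q hq
              rw [hL']
              unfold IdleF
              rcases eq_or_ne q p with hqp2 | hqp2
              · subst hqp2
                rw [Function.update_self]
                exact Or.inr rfl
              · rw [Function.update_of_ne hqp2]
                exact hid q hq hqp2
            · intro rm
              rw [hR']
              rcases eq_or_ne rm x with hrm | hrm
              · rw [hrm, Function.update_self, if_pos rfl]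
              · rw [Function.update_of_ne hrm, if_neg hrm, hz rm]
        · rcases hid p hpL hpq with h0 | h4
          · exact noop (by rw [if_neg hpL]; exact otherAct_noop (fun _ => by simp [hz x]) (by simp [h0]) (by simp [h0]) (by simp [h0]))
          · exact noop (by rw [if_neg hpL]; exact otherAct_noop (by simp [h4]) (by simp [h4]) (by simp [h4]) (by simp [h4]))
  · -- P4
    by_cases hpL : p = L
    · exact noop (by rw [if_pos hpL, hpL]; exact leaderAct_noop (by simp [hL4]) (by simp [hL4]) (by simp [hL4]) (by simp [hL4]))
    · exact noop (by rw [if_neg hpL]; exact otherAct_noop (by simp [hO4 p hpL]) (by simp [hO4 p hpL]) (by simp [hO4 p hpL]) (by simp [hO4 p hpL]))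

end TwoSwitchStep
section TwoSwitchFinal

open Finset

variable {n r : ℕ}

lemma tsinv_zero (hr : 0 < r) (L : Fin n) (sch : ℕ → Fin n × Fin r) : TSInv L sch 0 := by
  refine ⟨?_, ?_, ?_⟩
  · intro h1
    simp [tsRun] at h1
  · intro p hp h2
    simp [tsRun] at h2
  · refine Or.inl ⟨rfl, fun p hp => rfl, rfl, ∅, rfl, hr, fun rm => by simp [tsRun], by simp⟩

end TwoSwitchFinal
/-- in the two-switch protocol, immediately after the leader's
`k`-th flip `Next → Ready` (his `k`-th iteration of the final repeat loop),
exactly `k` prisoners are exhausted; every exhausted prisoner has visited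
every room; consequently, the leader declares only after all `n` prisoners
have visited every room. -/
theorem two_switch_count_correct (n r : ℕ) (hn : 1 < n) (hr : 0 < r) (L : Fin n)
    (sch : ℕ → Fin n × Fin r) :
    (∀ t : ℕ,
      ((tsRun L sch t).loc L).1 = 3 → (sch t).1 = L →
      (tsRun L sch t).rooms (sch t).2 = C4.next →
      Nat.card {p : Fin n | tsExhausted L (tsRun L sch (t + 1)) p}
        = ((tsRun L sch t).loc L).2 + 1) ∧
    (∀ (t : ℕ) (p : Fin n), tsExhausted L (tsRun L sch t) p →
      ∀ rm : Fin r, ∃ t' < t, sch t' = (p, rm)) ∧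
    (∀ t : ℕ, (tsRun L sch t).declared = true →
      ∀ (p : Fin n) (rm : Fin r), ∃ t' < t, sch t' = (p, rm)) := by
  have key : ∀ t, TSInv L sch t := by
    intro t
    induction t with
    | zero => exact tsinv_zero hr L sch
    | succ t ih => exact tsinv_step hn hr L sch t ih
  refine ⟨?_, ?_, ?_⟩
  · -- claim A
    intro t h3 hpl hnx
    obtain ⟨vL, vO, ph⟩ := key t
    rcases ph with ⟨h0, _⟩ | ⟨h0, _⟩ | ⟨h0, _⟩ | ⟨hL3, hcn, hd, hsub⟩ | ⟨h0, _⟩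
    · omega
    · omega
    · omega
    · rcases hsub with ⟨hk, hidle, x₀, htok⟩ | ⟨hk, hidle, x₀, htok⟩ |
        ⟨hk, q, hqL, hq1, hid, S, hSc, hSlt, h01, hV⟩ |
        ⟨hk, q, hqL, hq2, hid, S, hSc, hSlt, h10⟩ | ⟨hk, q, hqL, hq3, hid, hz⟩
      · -- the real case : alpha
        obtain ⟨⟨p, x⟩, hv⟩ : ∃ v, sch t = v := ⟨_, rfl⟩
        rw [hv] at hpl hnx
        have hp : p = L := hpl
        have key2 : ∃ st' : ℕ × ℕ, 3 ≤ st'.1 ∧ ∃ b,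
            (if p = L then leaderAct r n ((tsRun L sch t).loc p)
                ((tsRun L sch t).rooms x)
              else otherAct r ((tsRun L sch t).loc p) ((tsRun L sch t).rooms x))
            = (st', C4.ready, b) := by
          rw [if_pos hp, hp]
          by_cases hcn' : ((tsRun L sch t).loc L).2 + 1 = n
          · exact ⟨(4, 0), by norm_num, true, by simp [leaderAct, h3, hnx, hcn']⟩
          · exact ⟨(3, ((tsRun L sch t).loc L).2 + 1), by norm_num, false,
              by simp [leaderAct, h3, hnx, hcn']⟩
        obtain ⟨st', hst3, b, ha⟩ := key2
        have hL' : (tsRun L sch (t + 1)).loc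
            = Function.update (tsRun L sch t).loc p st' := by
          rw [show tsRun L sch (t + 1) = tsStep L (sch t) (tsRun L sch t) from rfl, hv,
            tsStep_eq ha]
        have hset : {q : Fin n | tsExhausted L (tsRun L sch (t + 1)) q}
            = ↑(insert L (doneF L (tsRun L sch t).loc)) := by
          ext q
          simp only [Set.mem_setOf_eq, tsExhausted, hL', Finset.coe_insert,
            Set.mem_insert_iff, Finset.mem_coe, mem_doneF]
          rcases eq_or_ne q L with hq | hq
          · subst hq
            rw [if_pos rfl, hp, Function.update_self]
            simp [hst3]
          · rw [if_neg hq, Function.update_of_ne (by rw [hp]; exact hq)]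
            rcases hidle q hq with h4 | h4 <;> simp [hq, h4]
        have hLnotin : L ∉ doneF L (tsRun L sch t).loc := fun h => (mem_doneF.mp h).1 rfl
        calc Nat.card {q : Fin n | tsExhausted L (tsRun L sch (t + 1)) q}
            = (insert L (doneF L (tsRun L sch t).loc)).card := by
              rw [hset, Nat.card_coe_set_eq, Set.ncard_coe_finset]
          _ = (doneF L (tsRun L sch t).loc).card + 1 :=
              Finset.card_insert_of_notMem hLnotin
          _ = ((tsRun L sch t).loc L).2 + 1 := by rw [hk]
      · rcases RoomsTok_cases htok (sch t).2 with h | h <;> rw [hnx] at h <;> simp at h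
      · rcases Rooms01_cases h01 (sch t).2 with h | h <;> rw [hnx] at h <;> simp at h
      · rcases Rooms10_cases h10 (sch t).2 with h | h <;> rw [hnx] at h <;> simp at h
      · have h := hz (sch t).2
        rw [hnx] at h
        simp at h
    · omega
  · -- claim B
    intro t q hq rm
    obtain ⟨vL, vO, _⟩ := key t
    unfold tsExhausted at hq
    rcases eq_or_ne q L with hqL | hqL
    · subst hqL
      rw [if_pos rfl] at hq
      exact vL (by omega) rm
    · rw [if_neg hqL] at hq
      exact vO q hqL (by omega) rm
  · -- claim C
    intro t hdec q rm
    obtain ⟨vL, vO, ph⟩ := key t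
    rcases ph with ⟨_, _, hd, _⟩ | ⟨_, _, hd, _⟩ | ⟨_, _, hd, _⟩ | ⟨_, _, hd, _⟩ | ⟨h4, hall⟩
    · rw [hdec] at hd; cases hd
    · rw [hdec] at hd; cases hd
    · rw [hdec] at hd; cases hd
    · rw [hdec] at hd; cases hd
    · rcases eq_or_ne q L with hqL | hqL
      · subst hqL
        exact vL (by omega) rm
      · have := hall q hqL
        exact vO q hqL (by omega) rm
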